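/- arXiv:2304.00607 — 3 statements merged into one kernel-verified Lean document; each statement's English description precedes it below -/
import Mathlib

section
/- Fix (ε,d) ∈ {(1,1),(−1,0),(1,0)} and let r ≥ r₁. Define x₀ ∈ V_r by: x₀ = 0 if (ε,d) = (−1,0) and r = 1; x₀ = i·√2·h if (ε,d) = (1,1) and r = 1; and x₀ = e_{r−1} − f_{r−1} otherwise; and set φ₂ = e_r + f_r + x₀ (an isotropic vector). Then for every triple (p₀,p₁,p₂) of lines in P_r that are pairwise non-orthogonal (ω(v_i,v_j) ≠ 0 for i ≠ j, for representatives v_i) and whose representatives v₀,v₁,v₂ are linearly independent, there exists g ∈ G_r with g·p₀ = [e_r], g·p₁ = [f_r], and g·p₂ = [φ₂]. -/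
/-! Rescaling the three lines, a generic triple becomes a normalized one: isotropic `u₀, u₁, u₂`
with `ω(u₀,u₁) = ω(u₀,u₂) = 1` and `ω(u₁,u₂) = ε`. Then `(u₀, u₁)` is a hyperbolic pair, and
`w = u₂ - u₀ - u₁` is a nonzero vector orthogonal to it with `ω(w,w) = -ε - ε²`, which is `-2`
in the orthogonal cases and `0` in the symplectic case; for the target triple `(e_r, f_r, φ₂)`
this vector is `x₀`. Any two hyperbolic pairs are isometric, and on the nondegenerate orthogonal
complements there is an isometry sending `w` to `x₀`: over `ℂ` all nondegenerate quadratic forms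
of a given dimension are equivalent, so for `ε = 1` this follows by splitting off the line of the
anisotropic vector `w`, and for `ε = -1` by completing `w` to a hyperbolic pair and inducting on
the dimension. Gluing the two isometries along the orthogonal decomposition gives `g`. -/

noncomputable section

open scoped Classical

namespace DCM

/-- `Vc r d` is `ℂ^(2r+d)`, with coordinates taken in the ordered basis
`e_r, …, e_1, (h), f_1, …, f_r` (the middle vector `h` being present only if `d = 1`). -/
abbrev Vc (r d : ℕ) := Fin (2 * r + d) → ℂ

/-- `e_i` for `1 ≤ i ≤ r`: the standard basis vector at position `r - i`. -/
def eV (r d i : ℕ) : Vc r d := fun k => if (k : ℕ) = r - i then 1 else 0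

/-- `h`: the standard basis vector at position `r` (relevant only when `d = 1`). -/
def hV (r d : ℕ) : Vc r d := fun k => if (k : ℕ) = r then 1 else 0

/-- `f_i` for `1 ≤ i ≤ r`: the standard basis vector at position `r + d + i - 1`. -/
def fV (r d i : ℕ) : Vc r d := fun k => if (k : ℕ) = r + d + i - 1 then 1 else 0

/-- The ε-symmetric bilinear form ω on `Vc r d`, determined by `ω(e_i,f_j) = δ_ij`,
`ω(f_i,e_j) = ε·δ_ij`, `ω(e_i,e_j) = ω(f_i,f_j) = 0`, and (when `d = 1`)
`ω(h,h) = 1` and `h` orthogonal to all `e_i`, `f_i`. -/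
def om (ε : ℂ) (r d : ℕ) (v w : Vc r d) : ℂ :=
  (∑ j : Fin r,
    (v ⟨r - 1 - (j : ℕ), by have := j.isLt; omega⟩ *
        w ⟨r + d + (j : ℕ), by have := j.isLt; omega⟩ +
      ε * v ⟨r + d + (j : ℕ), by have := j.isLt; omega⟩ *
        w ⟨r - 1 - (j : ℕ), by have := j.isLt; omega⟩)) +
  (if hd : d = 1 then v ⟨r, by omega⟩ * w ⟨r, by omega⟩ else 0)

/-- `v` is a nonzero isotropic vector, i.e. it represents a line `[v] ∈ P_r`. -/
def IsoV (ε : ℂ) (r d : ℕ) (v : Vc r d) : Prop := v ≠ 0 ∧ om ε r d v v = 0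

/-- `g` lies in `G_r`, the group of linear automorphisms preserving ω. -/
def InG (ε : ℂ) (r d : ℕ) (g : Vc r d ≃ₗ[ℂ] Vc r d) : Prop :=
  ∀ v w, om ε r d (g v) (g w) = om ε r d v w

/-- The ω-cross-ratio `CR₀`. -/
def CR0 (ε : ℂ) (r d : ℕ) (v0 v1 v2 v3 : Vc r d) : ℂ :=
  (om ε r d v0 v2 * om ε r d v1 v3) / (om ε r d v0 v3 * om ε r d v1 v2)

/-- The ω-cross-ratio `CR₁`. -/
def CR1 (ε : ℂ) (r d : ℕ) (v0 v1 v2 v3 : Vc r d) : ℂ := (CR0 ε r d v1 v2 v0 v3)⁻¹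

/-- The ω-cross-ratio `CR₂`. -/
def CR2 (ε : ℂ) (r d : ℕ) (v0 v1 v2 v3 : Vc r d) : ℂ := CR0 ε r d v2 v0 v1 v3

/-- `(v0,v1,v2,v3)` represents a tuple of lines in `P_r^{(4)}`:
all lines isotropic and pairwise non-orthogonal. -/
def Conf4 (ε : ℂ) (r d : ℕ) (v0 v1 v2 v3 : Vc r d) : Prop :=
  IsoV ε r d v0 ∧ IsoV ε r d v1 ∧ IsoV ε r d v2 ∧ IsoV ε r d v3 ∧
  om ε r d v0 v1 ≠ 0 ∧ om ε r d v0 v2 ≠ 0 ∧ om ε r d v0 v3 ≠ 0 ∧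
  om ε r d v1 v2 ≠ 0 ∧ om ε r d v1 v3 ≠ 0 ∧ om ε r d v2 v3 ≠ 0

/-- `(v0,…,v4)` represents a tuple of lines in `P_r^{(5)}`. -/
def Conf5 (ε : ℂ) (r d : ℕ) (v0 v1 v2 v3 v4 : Vc r d) : Prop :=
  Conf4 ε r d v0 v1 v2 v3 ∧ IsoV ε r d v4 ∧
  om ε r d v0 v4 ≠ 0 ∧ om ε r d v1 v4 ≠ 0 ∧ om ε r d v2 v4 ≠ 0 ∧ om ε r d v3 v4 ≠ 0

/-- ω restricted to the span of `s` is nondegenerate. -/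
def NondegOn (ε : ℂ) (r d : ℕ) (s : Set (Vc r d)) : Prop :=
  ∀ x ∈ Submodule.span ℂ s, (∀ y ∈ Submodule.span ℂ s, om ε r d x y = 0) → x = 0

/-- `(v0,v1,v2,v3)` represents a tuple of lines in `P_r^{{4}}`: pairwise non-orthogonal
isotropic lines, linearly independent, spanning a nondegenerate subspace. -/
def Gen4 (ε : ℂ) (r d : ℕ) (v0 v1 v2 v3 : Vc r d) : Prop :=
  Conf4 ε r d v0 v1 v2 v3 ∧ LinearIndependent ℂ ![v0, v1, v2, v3] ∧
  NondegOn ε r d {v0, v1, v2, v3}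

/-- `(v0,…,v4)` represents a tuple of lines in `P_r^{{5}}`: every 4-element subtuple
(in the induced order) lies in `P_r^{{4}}`. -/
def Gen5 (ε : ℂ) (r d : ℕ) (v0 v1 v2 v3 v4 : Vc r d) : Prop :=
  Conf5 ε r d v0 v1 v2 v3 v4 ∧
  Gen4 ε r d v0 v1 v2 v3 ∧ Gen4 ε r d v0 v1 v2 v4 ∧ Gen4 ε r d v0 v1 v3 v4 ∧
  Gen4 ε r d v0 v2 v3 v4 ∧ Gen4 ε r d v1 v2 v3 v4

/-- `Γ(z₁,z₂) = 1 - z₁ - z₂`. -/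
def Gam (z1 z2 : ℂ) : ℂ := 1 - z1 - z2

/-- `Δ(z₁,z₂) = Γ(z₁,z₂)² - 2(1+ε)·z₁z₂`. -/
def Del (ε z1 z2 : ℂ) : ℂ := Gam z1 z2 ^ 2 - 2 * (1 + ε) * z1 * z2

/-- `Δ^{1/2}`, relative to a fixed choice `sq` of complex square root:
`Γ` if `ε = -1`, and `sq ∘ Δ` otherwise. -/
def DelHalf (ε : ℂ) (sq : ℂ → ℂ) (z1 z2 : ℂ) : ℂ :=
  if ε = -1 then Gam z1 z2 else sq (Del ε z1 z2)

/-- `φ₊ = (Δ^{1/2} + Γ)/2`. -/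
def phiP (ε : ℂ) (sq : ℂ → ℂ) (z1 z2 : ℂ) : ℂ := (DelHalf ε sq z1 z2 + Gam z1 z2) / 2

/-- `φ₋ = (Δ^{1/2} - Γ)/2`. -/
def phiM (ε : ℂ) (sq : ℂ → ℂ) (z1 z2 : ℂ) : ℂ := (DelHalf ε sq z1 z2 - Gam z1 z2) / 2

end DCM

theorem LinearIndependent.smul_sub_smul_sub_smul_ne_zero {K V : Type*} [Field K] [AddCommGroup V]
    [Module K V] {v₀ v₁ v₂ : V} (hv : LinearIndependent K ![v₀, v₁, v₂]) (c₀ c₁ : K) {c₂ : K}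
    (hc₂ : c₂ ≠ 0) : c₂ • v₂ - c₀ • v₀ - c₁ • v₁ ≠ 0 := by
  intro h
  have := Fintype.linearIndependent_iff.1 hv ![-c₀, -c₁, c₂] (by
    rw [Fin.sum_univ_three, ← h]
    simp only [Matrix.cons_val, neg_smul]
    abel) 2
  exact hc₂ (by simpa using this)

namespace LinearMap.BilinForm

open Module Submodule
open LinearMap (BilinForm)

section Field

variable {K V V' : Type*} [Field K] [AddCommGroup V] [Module K V] [AddCommGroup V'] [Module K V']
  {B : BilinForm K V} {B' : BilinForm K V'}

theorem Nondegenerate.exists_apply_eq_one (hB : B.Nondegenerate) {x : V} (hx : x ≠ 0) :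
    ∃ y, B x y = 1 := by
  obtain ⟨y, hy⟩ : ∃ y, B x y ≠ 0 := by
    by_contra! h
    exact hx (hB.1 x h)
  exact ⟨(B x y)⁻¹ • y, by simp [hy]⟩

theorem nondegenerate_restrict_orthogonal [FiniteDimensional K V] (hB : B.Nondegenerate)
    (hB₀ : B.IsRefl) {W : Submodule K V} (hW : (B.restrict W).Nondegenerate) :
    (B.restrict (B.orthogonal W)).Nondegenerate := by
  rw [restrict_nondegenerate_iff_isCompl_orthogonal hB₀, orthogonal_orthogonal hB hB₀]
  exact (isCompl_orthogonal_of_restrict_nondegenerate hB₀ hW).symm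

theorem apply_add_add_of_mem_orthogonal (hB₀ : B.IsRefl) {W : Submodule K V} {w w₁ u u₁ : V}
    (hw : w ∈ W) (hw₁ : w₁ ∈ W) (hu : u ∈ B.orthogonal W) (hu₁ : u₁ ∈ B.orthogonal W) :
    B (w + u) (w₁ + u₁) = B w w₁ + B u u₁ := by
  simp [hu₁ w hw, hB₀ _ _ (hu w₁ hw₁)]

theorem exists_isometryEquiv_of_basis {ι : Type*} (b : Basis ι K V) (b' : Basis ι K V')
    (h : ∀ i j, B' (b' i) (b' j) = B (b i) (b j)) :
    ∃ f : B.IsometryEquiv B', ∀ i, f (b i) = b' i := by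
  let e := b.equiv b' (Equiv.refl ι)
  have he : ∀ i, e (b i) = b' i := fun i => by simp [e]
  have hcomp : B'.compl₁₂ (e : V →ₗ[K] V') (e : V →ₗ[K] V') = B :=
    ext_basis b fun i j => by simp [he, h]
  exact ⟨{ e with map_app' := fun x y => congrArg (fun F : BilinForm K V => F x y) hcomp }, he⟩

theorem equivalent_of_finrank_eq_zero [FiniteDimensional K V] [FiniteDimensional K V']
    (h : finrank K V = 0) (h' : finrank K V' = 0) : B.Equivalent B' :=
  let ⟨f, _⟩ := exists_isometryEquiv_of_basis (B := B) (B' := B')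
    (finBasisOfFinrankEq K V h) (finBasisOfFinrankEq K V' h') fun i => i.elim0
  ⟨f⟩

theorem exists_isometryEquiv_of_isCompl [FiniteDimensional K V] [FiniteDimensional K V']
    (hB₀ : B.IsRefl) (hB₀' : B'.IsRefl) {W : Submodule K V} {W' : Submodule K V'}
    (hW : (B.restrict W).Nondegenerate) (hW' : (B'.restrict W').Nondegenerate)
    (f : (B.restrict W).IsometryEquiv (B'.restrict W'))
    (g : (B.restrict (B.orthogonal W)).IsometryEquiv (B'.restrict (B'.orthogonal W'))) :
    ∃ h : B.IsometryEquiv B', (∀ w : W, h w = f w) ∧ ∀ u : B.orthogonal W, h u = g u := by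
  let e := prodEquivOfIsCompl _ _ (isCompl_orthogonal_of_restrict_nondegenerate hB₀ hW)
  let e' := prodEquivOfIsCompl _ _ (isCompl_orthogonal_of_restrict_nondegenerate hB₀' hW')
  let φ := e.symm.trans (((f : W ≃ₗ[K] W').prodCongr (g : _ ≃ₗ[K] _)).trans e')
  have hφ : ∀ p, φ (e p) = f p.1 + g p.2 := by simp [φ, e']
  refine ⟨{ φ with map_app' := fun x y => ?_ }, fun w => ?_, fun u => ?_⟩
  · obtain ⟨p, rfl⟩ := e.surjective x
    obtain ⟨q, rfl⟩ := e.surjective y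
    show B' (φ (e p)) (φ (e q)) = B (e p) (e q)
    rw [hφ, hφ, coe_prodEquivOfIsCompl', coe_prodEquivOfIsCompl',
      apply_add_add_of_mem_orthogonal hB₀' (f p.1).2 (f q.1).2 (g p.2).2 (g q.2).2,
      apply_add_add_of_mem_orthogonal hB₀ p.1.2 q.1.2 p.2.2 q.2.2]
    exact congrArg₂ (· + ·) (f.map_app q.1 p.1) (g.map_app q.2 p.2)
  · show φ w = f w
    simpa [e] using hφ (w, 0)
  · show φ u = g u
    simpa [e] using hφ (0, u)

variable {ι : Type*} [Fintype ι] [DecidableEq ι]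

theorem linearIndependent_of_det_ne_zero {v : ι → V}
    (h : (Matrix.of fun i j => B (v i) (v j)).det ≠ 0) : LinearIndependent K v := by
  refine Fintype.linearIndependent_iff.2 fun c hc => congrFun (Matrix.eq_zero_of_vecMul_eq_zero h ?_)
  ext j
  simpa [Matrix.vecMul, dotProduct, map_sum, mul_comm] using congrArg (B · (v j)) hc

theorem nondegenerate_restrict_span_of_det_ne_zero {v : ι → V}
    (h : (Matrix.of fun i j => B (v i) (v j)).det ≠ 0) :
    (B.restrict (span K (Set.range v))).Nondegenerate :=
  (nondegenerate_iff_det_ne_zero (Basis.span (linearIndependent_of_det_ne_zero h))).2 <| by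
    convert h using 2
    ext i j
    simp [BilinForm.toMatrix_apply, Basis.span_apply]

theorem finrank_orthogonal_span_of_det_ne_zero [FiniteDimensional K V] (hB : B.Nondegenerate)
    {v : ι → V} (hdet : (Matrix.of fun i j => B (v i) (v j)).det ≠ 0) :
    finrank K (B.orthogonal (span K (Set.range v))) = finrank K V - Fintype.card ι := by
  rw [finrank_orthogonal hB, finrank_span_eq_card (linearIndependent_of_det_ne_zero hdet)]

theorem exists_isometryEquiv_of_gram_eq [FiniteDimensional K V] [FiniteDimensional K V']
    (hB₀ : B.IsRefl) (hB₀' : B'.IsRefl) {v : ι → V} {v' : ι → V'}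
    (hdet : (Matrix.of fun i j => B (v i) (v j)).det ≠ 0)
    (hgram : ∀ i j, B' (v' i) (v' j) = B (v i) (v j))
    (g : (B.restrict (B.orthogonal (span K (Set.range v)))).IsometryEquiv
      (B'.restrict (B'.orthogonal (span K (Set.range v'))))) :
    ∃ h : B.IsometryEquiv B', (∀ i, h (v i) = v' i) ∧
      ∀ u : B.orthogonal (span K (Set.range v)), h u = g u := by
  have hdet' : (Matrix.of fun i j => B' (v' i) (v' j)).det ≠ 0 := by simpa [hgram] using hdet
  obtain ⟨f, hf⟩ := exists_isometryEquiv_of_basis (B := B.restrict _) (B' := B'.restrict _)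
    (Basis.span (linearIndependent_of_det_ne_zero hdet))
    (Basis.span (linearIndependent_of_det_ne_zero hdet')) fun i j => by
      simpa [Basis.span_apply] using hgram i j
  obtain ⟨h, hhf, hhg⟩ := exists_isometryEquiv_of_isCompl hB₀ hB₀'
    (nondegenerate_restrict_span_of_det_ne_zero hdet)
    (nondegenerate_restrict_span_of_det_ne_zero hdet') f g
  refine ⟨h, fun i => ?_, hhg⟩
  have := hhf (Basis.span (linearIndependent_of_det_ne_zero hdet) i)
  rwa [hf, Basis.span_apply, Basis.span_apply] at this

/- Complete `x` to a hyperbolic pair `(x, y)`; its orthogonal complement is again alternating and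
nondegenerate, of dimension two less, so induction provides the isometry there. -/
theorem IsAlt.exists_isometryEquiv_apply_eq [FiniteDimensional K V] [FiniteDimensional K V']
    (hB : B.IsAlt) (hB' : B'.IsAlt) (hnd : B.Nondegenerate) (hnd' : B'.Nondegenerate)
    (hdim : finrank K V = finrank K V') {x : V} {x' : V'} (hx : x ≠ 0) (hx' : x' ≠ 0) :
    ∃ f : B.IsometryEquiv B', f x = x' := by
  induction hn : finrank K V using Nat.strong_induction_on generalizing V V' with
  | _ n ih =>
  obtain ⟨y, hy⟩ := hnd.exists_apply_eq_one hx
  obtain ⟨y', hy'⟩ := hnd'.exists_apply_eq_one hx'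
  have hgram : ∀ i j, B' (![x', y'] i) (![x', y'] j) = B (![x, y] i) (![x, y] j) := by
    simp [Fin.forall_fin_two, hB.self_eq_zero, hB'.self_eq_zero, ← hB.neg_eq x, ← hB'.neg_eq x',
      hy, hy']
  have hdet : (Matrix.of fun i j => B (![x, y] i) (![x, y] j)).det ≠ 0 := by
    simp [Matrix.det_fin_two, hB.self_eq_zero, ← hB.neg_eq x, hy]
  have hdet' : (Matrix.of fun i j => B' (![x', y'] i) (![x', y'] j)).det ≠ 0 := by
    simpa [hgram] using hdet
  set U := B.orthogonal (span K (Set.range ![x, y]))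
  set U' := B'.orthogonal (span K (Set.range ![x', y']))
  have hU : finrank K U = n - 2 := by
    rw [finrank_orthogonal_span_of_det_ne_zero hnd hdet, hn, Fintype.card_fin]
  have hU' : finrank K U' = n - 2 := by
    rw [finrank_orthogonal_span_of_det_ne_zero hnd' hdet', ← hdim, hn, Fintype.card_fin]
  obtain ⟨g⟩ : (B.restrict U).Equivalent (B'.restrict U') := by
    rcases Nat.eq_zero_or_pos (n - 2) with h0 | hpos
    · exact equivalent_of_finrank_eq_zero (hU.trans h0) (hU'.trans h0)
    have : Nontrivial U := Module.nontrivial_of_finrank_pos (R := K) (by omega)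
    have : Nontrivial U' := Module.nontrivial_of_finrank_pos (R := K) (by omega)
    obtain ⟨u, hu⟩ := exists_ne (0 : U)
    obtain ⟨u', hu'⟩ := exists_ne (0 : U')
    obtain ⟨g, -⟩ := ih (n - 2) (by omega) (V := U) (V' := U') (fun u => hB u) (fun u => hB' u)
      (nondegenerate_restrict_orthogonal hnd hB.isRefl
        (nondegenerate_restrict_span_of_det_ne_zero hdet))
      (nondegenerate_restrict_orthogonal hnd' hB'.isRefl
        (nondegenerate_restrict_span_of_det_ne_zero hdet'))
      (hU.trans hU'.symm) hu hu' hU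
    exact ⟨g⟩
  obtain ⟨f, hf, -⟩ := exists_isometryEquiv_of_gram_eq hB.isRefl hB'.isRefl hdet hgram g
  exact ⟨f, hf 0⟩

/-- The normal form of a triple of pairwise non-orthogonal isotropic vectors, up to rescaling. -/
structure IsNormalizedTriple (B : BilinForm K V) (ε : K) (u₀ u₁ u₂ : V) : Prop where
  self₀ : B u₀ u₀ = 0
  self₁ : B u₁ u₁ = 0
  self₂ : B u₂ u₂ = 0
  apply₀₁ : B u₀ u₁ = 1
  apply₀₂ : B u₀ u₂ = 1
  apply₁₂ : B u₁ u₂ = ε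

variable {ε : K}

theorem isNormalizedTriple_add_add {e f x : V} (hB : ∀ x y, B y x = ε * B x y)
    (he : B e e = 0) (hf : B f f = 0) (hef : B e f = 1) (hex : B e x = 0) (hfx : B f x = 0)
    (hxx : B x x = -1 - ε) : B.IsNormalizedTriple ε e f (e + f + x) where
  self₀ := he
  self₁ := hf
  self₂ := by
    simp only [map_add, LinearMap.add_apply, hB e f, hB e x, hB f x, he, hf, hef, hex, hfx, hxx]
    ring
  apply₀₁ := hef
  apply₀₂ := by simp [he, hef, hex]
  apply₁₂ := by simp [hB e f, hf, hef, hfx]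

namespace IsNormalizedTriple

variable {u₀ u₁ u₂ : V}

theorem sub_sub_mem_orthogonal (hB : ∀ x y, B y x = ε * B x y)
    (hu : B.IsNormalizedTriple ε u₀ u₁ u₂) :
    u₂ - u₀ - u₁ ∈ B.orthogonal (span K (Set.range ![u₀, u₁])) := by
  have h : span K (Set.range ![u₀, u₁]) ≤ LinearMap.ker (B.flip (u₂ - u₀ - u₁)) := by
    rw [span_le, Set.range_subset_iff, Fin.forall_fin_two]
    constructor <;> simp [hu.self₀, hu.self₁, hu.apply₀₁, hu.apply₀₂, hu.apply₁₂, hB u₀ u₁]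
  exact fun n hn => h hn

theorem apply_sub_sub_self (hB : ∀ x y, B y x = ε * B x y)
    (hu : B.IsNormalizedTriple ε u₀ u₁ u₂) :
    B (u₂ - u₀ - u₁) (u₂ - u₀ - u₁) = -ε - ε ^ 2 := by
  simp only [map_sub, LinearMap.sub_apply, hu.self₀, hu.self₁, hu.self₂, hu.apply₀₁, hu.apply₀₂,
    hu.apply₁₂, hB u₀ u₁, hB u₀ u₂, hB u₁ u₂]
  ring

end IsNormalizedTriple

end Field

section Complex

variable {V V' : Type*} [AddCommGroup V] [Module ℂ V] [AddCommGroup V'] [Module ℂ V']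
  {B : BilinForm ℂ V} {B' : BilinForm ℂ V'}

theorem exists_smul_isNormalizedTriple {ε : ℂ} (hε : ε ≠ 0) {v₀ v₁ v₂ : V}
    (h₀ : B v₀ v₀ = 0) (h₁ : B v₁ v₁ = 0) (h₂ : B v₂ v₂ = 0)
    (h₀₁ : B v₀ v₁ ≠ 0) (h₀₂ : B v₀ v₂ ≠ 0) (h₁₂ : B v₁ v₂ ≠ 0) :
    ∃ c₀ c₁ c₂ : ℂ, c₀ ≠ 0 ∧ c₁ ≠ 0 ∧ c₂ ≠ 0 ∧
      B.IsNormalizedTriple ε (c₀ • v₀) (c₁ • v₁) (c₂ • v₂) := by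
  obtain ⟨s, hs⟩ := IsAlgClosed.exists_eq_mul_self (B v₁ v₂ / (ε * B v₀ v₁ * B v₀ v₂))
  have hs₀ : s ≠ 0 := by
    rintro rfl
    simp_all
  refine ⟨s, (s * B v₀ v₁)⁻¹, (s * B v₀ v₂)⁻¹, hs₀, by simp [*], by simp [*],
    ⟨by simp [h₀], by simp [h₁], by simp [h₂], ?_, ?_, ?_⟩⟩
  · simp only [map_smul, LinearMap.smul_apply, smul_eq_mul]
    field_simp
  · simp only [map_smul, LinearMap.smul_apply, smul_eq_mul]
    field_simp
  · simp only [map_smul, LinearMap.smul_apply, smul_eq_mul]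
    rw [div_eq_iff (by simp [*])] at hs
    field_simp
    linear_combination hs

/- Over `ℂ`, every nondegenerate quadratic form is a sum of squares. -/
theorem IsSymm.equivalent_of_finrank_eq [FiniteDimensional ℂ V] [FiniteDimensional ℂ V']
    (hB : B.IsSymm) (hB' : B'.IsSymm) (hnd : B.Nondegenerate) (hnd' : B'.Nondegenerate)
    (hdim : finrank ℂ V = finrank ℂ V') : B.Equivalent B' := by
  have hQ : QuadraticMap.associated B.toQuadraticMap = B :=
    QuadraticMap.associated_left_inverse ℂ hB.eq
  have hQ' : QuadraticMap.associated B'.toQuadraticMap = B' :=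
    QuadraticMap.associated_left_inverse ℂ hB'.eq
  have e := QuadraticForm.equivalent_weightedSumSquares_of_isAlgClosed _ (hQ ▸ hnd.1)
  have e' := QuadraticForm.equivalent_weightedSumSquares_of_isAlgClosed _ (hQ' ▸ hnd'.1)
  rw [← hdim] at e'
  obtain ⟨f⟩ := e.trans e'.symm
  have hcomp : B'.toQuadraticMap.comp (f : V →ₗ[ℂ] V') = B.toQuadraticMap :=
    QuadraticMap.ext fun x => f.map_app x
  refine ⟨{ (f : V ≃ₗ[ℂ] V') with map_app' := fun x y => ?_ }⟩
  calc B' (f x) (f y) = QuadraticMap.associated B'.toQuadraticMap (f x) (f y) := by rw [hQ']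
    _ = QuadraticMap.associated (B'.toQuadraticMap.comp (f : V →ₗ[ℂ] V')) x y := by
      rw [QuadraticMap.associated_comp]; rfl
    _ = B x y := by rw [hcomp, hQ]

theorem IsSymm.exists_isometryEquiv_apply_eq [FiniteDimensional ℂ V] [FiniteDimensional ℂ V']
    (hB : B.IsSymm) (hB' : B'.IsSymm) (hnd : B.Nondegenerate) (hnd' : B'.Nondegenerate)
    (hdim : finrank ℂ V = finrank ℂ V') {x : V} {x' : V'} (hx : B x x ≠ 0)
    (hxx' : B' x' x' = B x x) : ∃ f : B.IsometryEquiv B', f x = x' := by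
  have hgram : ∀ i j, B' (![x'] i) (![x'] j) = B (![x] i) (![x] j) := by simp [hxx']
  have hdet : (Matrix.of fun i j => B (![x] i) (![x] j)).det ≠ 0 := by simpa using hx
  have hdet' : (Matrix.of fun i j => B' (![x'] i) (![x'] j)).det ≠ 0 := by
    simpa [hxx'] using hdet
  obtain ⟨g⟩ := IsSymm.equivalent_of_finrank_eq (B := B.restrict _) (B' := B'.restrict _)
    ⟨fun u w => hB.eq u w⟩ ⟨fun u w => hB'.eq u w⟩
    (nondegenerate_restrict_orthogonal hnd hB.isRefl
      (nondegenerate_restrict_span_of_det_ne_zero hdet))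
    (nondegenerate_restrict_orthogonal hnd' hB'.isRefl
      (nondegenerate_restrict_span_of_det_ne_zero hdet'))
    (by rw [finrank_orthogonal_span_of_det_ne_zero hnd hdet,
      finrank_orthogonal_span_of_det_ne_zero hnd' hdet', hdim])
  obtain ⟨f, hf, -⟩ := exists_isometryEquiv_of_gram_eq hB.isRefl hB'.isRefl hdet hgram g
  exact ⟨f, hf 0⟩

theorem exists_isometryEquiv_apply_eq_of_sign [FiniteDimensional ℂ V] [FiniteDimensional ℂ V']
    {ε : ℂ} (hε : ε = 1 ∨ ε = -1) (hB : ∀ x y, B y x = ε * B x y)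
    (hB' : ∀ x y, B' y x = ε * B' x y) (hnd : B.Nondegenerate) (hnd' : B'.Nondegenerate)
    (hdim : finrank ℂ V = finrank ℂ V') {x : V} {x' : V'} (hx : x ≠ 0) (hx' : x' ≠ 0)
    (hxx : ε = 1 → B x x ≠ 0) (hxx' : B' x' x' = B x x) :
    ∃ f : B.IsometryEquiv B', f x = x' := by
  rcases hε with rfl | rfl
  · exact IsSymm.exists_isometryEquiv_apply_eq ⟨fun x y => by simpa using (hB x y).symm⟩
      ⟨fun x y => by simpa using (hB' x y).symm⟩ hnd hnd' hdim (hxx rfl) hxx'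
  · refine IsAlt.exists_isometryEquiv_apply_eq (fun x => ?_) (fun x => ?_) hnd hnd' hdim hx hx'
    · linear_combination (1 / 2 : ℂ) * hB x x
    · linear_combination (1 / 2 : ℂ) * hB' x x

theorem IsNormalizedTriple.exists_isometryEquiv [FiniteDimensional ℂ V] (hnd : B.Nondegenerate)
    {ε : ℂ} (hε : ε = 1 ∨ ε = -1) (hB : ∀ x y, B y x = ε * B x y) {u₀ u₁ u₂ v₀ v₁ v₂ : V}
    (hu : B.IsNormalizedTriple ε u₀ u₁ u₂) (hv : B.IsNormalizedTriple ε v₀ v₁ v₂)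
    (hu₂ : u₂ - u₀ - u₁ ≠ 0) (hv₂ : v₂ - v₀ - v₁ ≠ 0) :
    ∃ g : B.IsometryEquiv B, g u₀ = v₀ ∧ g u₁ = v₁ ∧ g u₂ = v₂ := by
  have hB₀ : B.IsRefl := fun x y h => by rw [hB, h, mul_zero]
  have hgram : ∀ i j, B (![v₀, v₁] i) (![v₀, v₁] j) = B (![u₀, u₁] i) (![u₀, u₁] j) := by
    simp [Fin.forall_fin_two, hu.self₀, hu.self₁, hu.apply₀₁, hv.self₀, hv.self₁, hv.apply₀₁,
      hB u₀, hB v₀]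
  have hdet : (Matrix.of fun i j => B (![u₀, u₁] i) (![u₀, u₁] j)).det ≠ 0 := by
    rcases hε with rfl | rfl <;> simp [Matrix.det_fin_two, hu.self₀, hu.self₁, hu.apply₀₁, hB u₀]
  have hdet' : (Matrix.of fun i j => B (![v₀, v₁] i) (![v₀, v₁] j)).det ≠ 0 := by
    simpa only [hgram] using hdet
  let w : B.orthogonal (span ℂ (Set.range ![u₀, u₁])) := ⟨_, hu.sub_sub_mem_orthogonal hB⟩
  let w' : B.orthogonal (span ℂ (Set.range ![v₀, v₁])) := ⟨_, hv.sub_sub_mem_orthogonal hB⟩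
  obtain ⟨g, hg⟩ := exists_isometryEquiv_apply_eq_of_sign (B := B.restrict _)
    (B' := B.restrict _) (x := w) (x' := w') hε
    (fun x y => hB x y) (fun x y => hB x y)
    (nondegenerate_restrict_orthogonal hnd hB₀ (nondegenerate_restrict_span_of_det_ne_zero hdet))
    (nondegenerate_restrict_orthogonal hnd hB₀ (nondegenerate_restrict_span_of_det_ne_zero hdet'))
    (by rw [finrank_orthogonal_span_of_det_ne_zero hnd hdet,
      finrank_orthogonal_span_of_det_ne_zero hnd hdet'])
    (fun h => hu₂ (congrArg Subtype.val h)) (fun h => hv₂ (congrArg Subtype.val h))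
    (by
      rintro rfl
      show B (u₂ - u₀ - u₁) (u₂ - u₀ - u₁) ≠ 0
      rw [hu.apply_sub_sub_self hB]
      norm_num)
    (show B (v₂ - v₀ - v₁) (v₂ - v₀ - v₁) = B (u₂ - u₀ - u₁) (u₂ - u₀ - u₁) by
      rw [hu.apply_sub_sub_self hB, hv.apply_sub_sub_self hB])
  obtain ⟨f, hf, hfg⟩ := exists_isometryEquiv_of_gram_eq hB₀ hB₀ hdet hgram g
  have hf₀ : f u₀ = v₀ := hf 0
  have hf₁ : f u₁ = v₁ := hf 1
  have hfw : f (u₂ - u₀ - u₁) = v₂ - v₀ - v₁ := by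
    rw [← Submodule.coe_mk (u₂ - u₀ - u₁) (hu.sub_sub_mem_orthogonal hB), hfg, hg]
  exact ⟨f, hf₀, hf₁, by simpa [hf₀, hf₁] using hfw⟩

end Complex

end LinearMap.BilinForm

namespace DCM

open LinearMap.BilinForm

variable {ε : ℂ} {r d : ℕ}

theorem om_add_left (v v' w : Vc r d) :
    om ε r d (v + v') w = om ε r d v w + om ε r d v' w := by
  simp only [om, Pi.add_apply]
  rw [add_add_add_comm, ← Finset.sum_add_distrib]
  congr 1
  · exact Finset.sum_congr rfl fun j _ => by ring
  · split_ifs <;> ring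

theorem om_add_right (v w w' : Vc r d) :
    om ε r d v (w + w') = om ε r d v w + om ε r d v w' := by
  simp only [om, Pi.add_apply]
  rw [add_add_add_comm, ← Finset.sum_add_distrib]
  congr 1
  · exact Finset.sum_congr rfl fun j _ => by ring
  · split_ifs <;> ring

theorem om_smul_left (c : ℂ) (v w : Vc r d) : om ε r d (c • v) w = c * om ε r d v w := by
  simp only [om, Pi.smul_apply, smul_eq_mul, mul_add, Finset.mul_sum]
  congr 1
  · exact Finset.sum_congr rfl fun j _ => by ring
  · split_ifs <;> ring

theorem om_smul_right (c : ℂ) (v w : Vc r d) : om ε r d v (c • w) = c * om ε r d v w := by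
  simp only [om, Pi.smul_apply, smul_eq_mul, mul_add, Finset.mul_sum]
  congr 1
  · exact Finset.sum_congr rfl fun j _ => by ring
  · split_ifs <;> ring

def omBilin (ε : ℂ) (r d : ℕ) : LinearMap.BilinForm ℂ (Vc r d) :=
  LinearMap.mk₂ ℂ (om ε r d) om_add_left om_smul_left om_add_right om_smul_right

theorem omBilin_apply (v w : Vc r d) : omBilin ε r d v w = om ε r d v w := rfl

theorem omBilin_comm (hε : ε = 1 ∨ ε = -1) (hd : d = 1 → ε = 1) (v w : Vc r d) :
    omBilin ε r d w v = ε * omBilin ε r d v w := by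
  have hε : ε * ε = 1 := by rcases hε with rfl | rfl <;> norm_num
  simp only [omBilin_apply, om, mul_add, Finset.mul_sum]
  congr 1
  · refine Finset.sum_congr rfl fun j _ => ?_
    linear_combination -(w ⟨r - 1 - j, by omega⟩ * v ⟨r + d + j, by omega⟩) * hε
  · split_ifs with h
    · simp [hd h, mul_comm]
    · simp

/- In the ordered basis `e_r, …, e_1, (h), f_1, …, f_r`, the form pairs coordinate `k` with
coordinate `2r + d - 1 - k`, i.e. with `Fin.rev k`. -/
theorem omBilin_single (hd : d ≤ 1) (v : Vc r d) (i : Fin (2 * r + d)) :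
    omBilin ε r d v (Pi.single i 1) = (if (i : ℕ) < r then ε else 1) * v i.rev := by
  have hv : ∀ (k : ℕ) (hk : k < 2 * r + d), k = 2 * r + d - 1 - i → v ⟨k, hk⟩ = v i.rev :=
    fun k hk h => congrArg v (Fin.ext (by simp; omega))
  simp only [omBilin_apply, om, Pi.single_apply, Fin.ext_iff, mul_ite, mul_one, mul_zero]
  have hi := i.isLt
  rcases lt_or_ge (i : ℕ) r with h | h
  · obtain ⟨j₀, hj₀⟩ : ∃ j₀ : Fin r, (j₀ : ℕ) = r - 1 - i := ⟨⟨r - 1 - i, by omega⟩, rfl⟩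
    rw [Finset.sum_eq_single j₀, if_pos h]
    · split_ifs <;> first | omega | (simp only [zero_add, add_zero]; rw [hv]; omega)
    · intro j _ hj
      have hj' : (j : ℕ) ≠ j₀ := fun h' => hj (Fin.ext h')
      rw [if_neg (by omega), if_neg (by omega), add_zero]
    · simp
  rcases lt_or_ge (i : ℕ) (r + d) with h' | h'
  · obtain rfl : d = 1 := by omega
    rw [Finset.sum_eq_zero fun j _ => by rw [if_neg (by omega), if_neg (by omega), add_zero]]
    simp only [show (i : ℕ) = r by omega, dif_pos, if_pos, lt_irrefl, if_false, zero_add, one_mul]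
    rw [hv]
    omega
  · obtain ⟨j₀, hj₀⟩ : ∃ j₀ : Fin r, (j₀ : ℕ) = i - r - d := ⟨⟨i - r - d, by omega⟩, rfl⟩
    rw [Finset.sum_eq_single j₀, if_neg (show ¬ (i : ℕ) < r by omega)]
    · split_ifs <;> first | omega | (simp only [add_zero, one_mul]; rw [hv]; omega)
    · intro j _ hj
      have hj' : (j : ℕ) ≠ j₀ := fun h' => hj (Fin.ext h')
      rw [if_neg (by omega), if_neg (by omega), add_zero]
    · simp

theorem omBilin_nondegenerate (hε : ε ≠ 0) (hd : d ≤ 1) : (omBilin ε r d).Nondegenerate := by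
  refine Nondegenerate.ofSeparatingLeft fun v hv => funext fun i => ?_
  have := hv (Pi.single i.rev 1)
  rw [omBilin_single hd, Fin.rev_rev] at this
  split_ifs at this <;> simpa [hε] using this

theorem omBilin_eV (hd : d ≤ 1) {j : ℕ} (hj₁ : 1 ≤ j) (hj₂ : j ≤ r) (v : Vc r d) :
    omBilin ε r d v (eV r d j) = ε * v ⟨r + d + j - 1, by omega⟩ := by
  have : eV r d j = Pi.single ⟨r - j, by omega⟩ 1 := by
    ext k
    simp [eV, Pi.single_apply, Fin.ext_iff]
  rw [this, omBilin_single hd, if_pos (by simp; omega)]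
  congr 2
  ext
  simp
  omega

theorem omBilin_fV (hd : d ≤ 1) {j : ℕ} (hj₁ : 1 ≤ j) (hj₂ : j ≤ r) (v : Vc r d) :
    omBilin ε r d v (fV r d j) = v ⟨r - j, by omega⟩ := by
  have : fV r d j = Pi.single ⟨r + d + j - 1, by omega⟩ 1 := by
    ext k
    simp [fV, Pi.single_apply, Fin.ext_iff]
  rw [this, omBilin_single hd, if_neg (by simp; omega), one_mul]
  congr 1
  ext
  simp
  omega

theorem omBilin_hV (v : Vc r 1) : omBilin ε r 1 v (hV r 1) = v ⟨r, by omega⟩ := by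
  have : hV r 1 = Pi.single ⟨r, by omega⟩ 1 := by
    ext k
    simp [hV, Pi.single_apply, Fin.ext_iff]
  rw [this, omBilin_single le_rfl, if_neg (by simp), one_mul]
  congr 1
  ext
  simp
  omega

theorem isNormalizedTriple_eV_fV_add (hε : ε = 1 ∨ ε = -1) (hd : d ≤ 1) (hd1 : d = 1 → ε = 1)
    (hr : 1 ≤ r) {x : Vc r d} (hex : omBilin ε r d (eV r d r) x = 0)
    (hfx : omBilin ε r d (fV r d r) x = 0) (hxx : omBilin ε r d x x = -1 - ε) :
    (omBilin ε r d).IsNormalizedTriple ε (eV r d r) (fV r d r) (eV r d r + fV r d r + x) := by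
  refine isNormalizedTriple_add_add (omBilin_comm hε hd1) ?_ ?_ ?_ hex hfx hxx
  · simp (disch := omega) only [omBilin_eV hd, eV, if_neg, mul_zero]
  · simp (disch := omega) only [omBilin_fV hd, fV, if_neg]
  · simp (disch := omega) only [omBilin_fV hd, eV, ↓reduceIte]

theorem x0_spec (hεd : (ε = 1 ∧ d = 1) ∨ (ε = -1 ∧ d = 0) ∨ (ε = 1 ∧ d = 0))
    (hr1 : 1 ≤ r) (hr2 : ε = 1 ∧ d = 0 → 2 ≤ r) {x0 : Vc r d}
    (hx0a : ε = -1 ∧ d = 0 ∧ r = 1 → x0 = 0)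
    (hx0b : ε = 1 ∧ d = 1 ∧ r = 1 → x0 = (Complex.I * (Real.sqrt 2 : ℂ)) • hV r d)
    (hx0c : ¬(ε = -1 ∧ d = 0 ∧ r = 1) → ¬(ε = 1 ∧ d = 1 ∧ r = 1) →
      x0 = eV r d (r - 1) - fV r d (r - 1)) :
    omBilin ε r d (eV r d r) x0 = 0 ∧ omBilin ε r d (fV r d r) x0 = 0 ∧
      omBilin ε r d x0 x0 = -1 - ε ∧ (3 ≤ 2 * r + d → x0 ≠ 0) := by
  have hd : d ≤ 1 := by omega
  by_cases hA : ε = -1 ∧ d = 0 ∧ r = 1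
  · obtain ⟨rfl, rfl, rfl⟩ := hA
    simp [hx0a]
  by_cases hB : ε = 1 ∧ d = 1 ∧ r = 1
  · obtain ⟨rfl, rfl, rfl⟩ := hB
    have hc : Complex.I * (Real.sqrt 2 : ℂ) * (Complex.I * (Real.sqrt 2 : ℂ)) = -2 := by
      rw [mul_mul_mul_comm, Complex.I_mul_I, ← Complex.ofReal_mul, Real.mul_self_sqrt zero_le_two]
      norm_num
    have hxx : omBilin 1 1 1 x0 x0 = -2 := by simp [hx0b, omBilin_hV, hV, hc]
    refine ⟨by simp [hx0b, omBilin_hV, eV], by simp [hx0b, omBilin_hV, fV],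
      by rw [hxx]; norm_num, fun _ h => ?_⟩
    norm_num [h] at hxx
  have hr : 2 ≤ r := by
    by_contra hr
    rcases hεd with ⟨h1, h2⟩ | ⟨h1, h2⟩ | h
    · exact hB ⟨h1, h2, by omega⟩
    · exact hA ⟨h1, h2, by omega⟩
    · exact hr (hr2 h)
  rw [hx0c hA hB]
  simp (disch := omega) only [map_sub, LinearMap.sub_apply, omBilin_eV hd, omBilin_fV hd, eV, fV,
    if_neg, ↓reduceIte]
  refine ⟨by ring, by ring, by ring, fun _ h => ?_⟩
  have := congrFun h ⟨1, by omega⟩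
  simp (disch := omega) only [Pi.sub_apply, Pi.zero_apply, eV, fV, if_neg, if_pos] at this
  norm_num at this

/-- For `(ε,d) ∈ {(1,1),(−1,0),(1,0)}` and `r ≥ r₁`, with
`x₀` and `φ₂ = e_r + f_r + x₀` as specified (an isotropic vector), the group `G_r` acts
transitively on generic triples of isotropic lines: any triple of pairwise non-orthogonal,
linearly independent isotropic lines can be moved to `([e_r],[f_r],[φ₂])`. -/
theorem statement_0 (ε : ℂ) (d : ℕ)
    (hεd : (ε = 1 ∧ d = 1) ∨ (ε = -1 ∧ d = 0) ∨ (ε = 1 ∧ d = 0))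
    (r : ℕ) (hr1 : 1 ≤ r) (hr2 : ε = 1 ∧ d = 0 → 2 ≤ r)
    (x0 : Vc r d)
    (hx0a : ε = -1 ∧ d = 0 ∧ r = 1 → x0 = 0)
    (hx0b : ε = 1 ∧ d = 1 ∧ r = 1 → x0 = (Complex.I * (Real.sqrt 2 : ℂ)) • hV r d)
    (hx0c : ¬(ε = -1 ∧ d = 0 ∧ r = 1) → ¬(ε = 1 ∧ d = 1 ∧ r = 1) →
      x0 = eV r d (r - 1) - fV r d (r - 1))
    (φ2 : Vc r d) (hφ2 : φ2 = eV r d r + fV r d r + x0) :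
    IsoV ε r d φ2 ∧
    ∀ v0 v1 v2 : Vc r d,
      IsoV ε r d v0 → IsoV ε r d v1 → IsoV ε r d v2 →
      om ε r d v0 v1 ≠ 0 → om ε r d v0 v2 ≠ 0 → om ε r d v1 v2 ≠ 0 →
      LinearIndependent ℂ ![v0, v1, v2] →
      ∃ g : Vc r d ≃ₗ[ℂ] Vc r d, InG ε r d g ∧
        (∃ c0 : ℂ, c0 ≠ 0 ∧ g v0 = c0 • eV r d r) ∧
        (∃ c1 : ℂ, c1 ≠ 0 ∧ g v1 = c1 • fV r d r) ∧
        (∃ c2 : ℂ, c2 ≠ 0 ∧ g v2 = c2 • φ2) := by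
  obtain ⟨hε, hd, hd1⟩ : (ε = 1 ∨ ε = -1) ∧ d ≤ 1 ∧ (d = 1 → ε = 1) := by
    rcases hεd with ⟨rfl, rfl⟩ | ⟨rfl, rfl⟩ | ⟨rfl, rfl⟩ <;> norm_num
  have hε₀ : ε ≠ 0 := by rcases hε with rfl | rfl <;> norm_num
  obtain ⟨hex, hfx, hxx, hx0⟩ := x0_spec hεd hr1 hr2 hx0a hx0b hx0c
  have hstd := isNormalizedTriple_eV_fV_add hε hd hd1 hr1 hex hfx hxx
  rw [← hφ2] at hstd
  refine ⟨⟨fun h => by simpa [h] using hstd.apply₀₂, hstd.self₂⟩, ?_⟩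
  intro v0 v1 v2 h0 h1 h2 h01 h02 h12 hli
  have h3 : 3 ≤ 2 * r + d := by simpa using hli.fintype_card_le_finrank
  obtain ⟨c0, c1, c2, hc0, hc1, hc2, hu⟩ :=
    exists_smul_isNormalizedTriple (B := omBilin ε r d) hε₀ h0.2 h1.2 h2.2 h01 h02 h12
  obtain ⟨g, hg0, hg1, hg2⟩ := hu.exists_isometryEquiv (omBilin_nondegenerate hε₀ hd) hε
    (omBilin_comm hε hd1) hstd (hli.smul_sub_smul_sub_smul_ne_zero c0 c1 hc2)
    (by convert hx0 h3 using 1; rw [hφ2]; abel)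
  refine ⟨g, fun v w => g.map_app w v, ⟨c0⁻¹, inv_ne_zero hc0, ?_⟩, ⟨c1⁻¹, inv_ne_zero hc1, ?_⟩,
    ⟨c2⁻¹, inv_ne_zero hc2, ?_⟩⟩
  · rw [← hg0, map_smul, inv_smul_smul₀ hc0]; rfl
  · rw [← hg1, map_smul, inv_smul_smul₀ hc1]; rfl
  · rw [← hg2, map_smul, inv_smul_smul₀ hc2]; rfl
end DCM
end
end

section
/- Fix (ε,d) ∈ {(1,1),(−1,0),(1,0)} and r ≥ r₁. For every tuple p = ([v₀],[v₁],[v₂],[v₃]) ∈ P_r^{(4)} and any choice of representatives v₀,v₁,v₂,v₃, the Gram determinant satisfies det((ω(v_i,v_j))_{0≤i,j≤3}) = Δ(CR₁(p),CR₂(p)) · (ω(v₀,v₁)·ω(v₂,v₃))². -/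
noncomputable section

open scoped Classical

namespace DCM

/-! Isotropy makes the Gram matrix of `v₀,…,v₃` hollow, and ε-symmetry of ω with `ε² = 1`
determines it by the six pairings; its determinant is then the quadric
`P² + Q² + R² - 2PQ - 2QR - 2εPR` in `P = ω₀₁ω₂₃`, `Q = ω₀₂ω₁₃`, `R = ω₀₃ω₁₂`.
The cross-ratios are `CR₁ = Q/P` and `CR₂ = εR/P`, and `Δ(Q/P, εR/P)·P²` expands to the same
quadric. -/

def gramQuadric {K : Type*} [CommRing K] (ε P Q R : K) : K :=
  P ^ 2 + Q ^ 2 + R ^ 2 - 2 * P * Q - 2 * Q * R - 2 * ε * P * R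

theorem det_gram_four_of_isotropic {V K : Type*} [CommRing K] (B : V → V → K) {ε : K}
    (hB : ∀ v w, B w v = ε * B v w) (hε : ε ^ 2 = 1) {v0 v1 v2 v3 : V}
    (h0 : B v0 v0 = 0) (h1 : B v1 v1 = 0) (h2 : B v2 v2 = 0) (h3 : B v3 v3 = 0) :
    (Matrix.of fun i j : Fin 4 => B (![v0, v1, v2, v3] i) (![v0, v1, v2, v3] j)).det =
      gramQuadric ε (B v0 v1 * B v2 v3) (B v0 v2 * B v1 v3) (B v0 v3 * B v1 v2) := by
  simp [gramQuadric, Matrix.det_succ_row_zero, Fin.sum_univ_succ, Fin.succAbove, h0, h1, h2, h3,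
    hB v0, hB v1 v2, hB v1 v3, hB v2 v3]
  linear_combination (norm := skip) (gramQuadric ε (B v0 v1 * B v2 v3) (B v0 v2 * B v1 v3)
    (B v0 v3 * B v1 v2) + ε * (B v0 v1 * B v2 v3) * (B v0 v3 * B v1 v2)) * hε
  unfold gramQuadric
  ring

theorem Del_mul_sq {ε P Q R : ℂ} (hε : ε ^ 2 = 1) (hP : P ≠ 0) :
    Del ε (Q / P) (ε * R / P) * P ^ 2 = gramQuadric ε P Q R := by
  unfold Del Gam gramQuadric
  field_simp
  linear_combination (R ^ 2 - 2 * Q * R) * hε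

theorem om_swap {ε : ℂ} {d : ℕ} (hε : ε ^ 2 = 1) (hd : d = 1 → ε = 1) (r : ℕ) (v w : Vc r d) :
    om ε r d w v = ε * om ε r d v w := by
  simp only [om, mul_add, Finset.mul_sum]
  congr 1
  · refine Finset.sum_congr rfl fun j _ => ?_
    linear_combination -(v ⟨r + d + (j : ℕ), by omega⟩ * w ⟨r - 1 - (j : ℕ), by omega⟩) * hε
  · split_ifs with h
    · rw [hd h, one_mul, mul_comm]
    · rw [mul_zero]

section

variable {ε : ℂ} {d : ℕ} (hε : ε ^ 2 = 1) (hd : d = 1 → ε = 1) {r : ℕ} (v0 v1 v2 v3 : Vc r d)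
include hε hd

theorem CR1_eq : CR1 ε r d v0 v1 v2 v3 =
    om ε r d v0 v2 * om ε r d v1 v3 / (om ε r d v0 v1 * om ε r d v2 v3) := by
  have hε0 : ε ≠ 0 := by rintro rfl; norm_num at hε
  rw [CR1, CR0, inv_div, om_swap hε hd r v0 v1, om_swap hε hd r v0 v2, mul_comm,
    mul_assoc, mul_assoc, mul_div_mul_left _ _ hε0]

theorem CR2_eq : CR2 ε r d v0 v1 v2 v3 =
    ε * (om ε r d v0 v3 * om ε r d v1 v2) / (om ε r d v0 v1 * om ε r d v2 v3) := by
  rw [CR2, CR0, om_swap hε hd r v1 v2]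
  ring

end

theorem statement_7_general (ε : ℂ) (d : ℕ)
    (hεd : (ε = 1 ∧ d = 1) ∨ (ε = -1 ∧ d = 0) ∨ (ε = 1 ∧ d = 0))
    (r : ℕ)
    (v0 v1 v2 v3 : Vc r d) (hp : Conf4 ε r d v0 v1 v2 v3) :
    (Matrix.of fun i j : Fin 4 =>
        om ε r d (![v0, v1, v2, v3] i) (![v0, v1, v2, v3] j)).det
      = Del ε (CR1 ε r d v0 v1 v2 v3) (CR2 ε r d v0 v1 v2 v3) *
          (om ε r d v0 v1 * om ε r d v2 v3) ^ 2 := by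
  obtain ⟨hε, hd⟩ : ε ^ 2 = 1 ∧ (d = 1 → ε = 1) := by
    rcases hεd with ⟨rfl, rfl⟩ | ⟨rfl, rfl⟩ | ⟨rfl, rfl⟩ <;> norm_num
  obtain ⟨⟨-, h0⟩, ⟨-, h1⟩, ⟨-, h2⟩, ⟨-, h3⟩, h01, -, -, -, -, h23⟩ := hp
  rw [det_gram_four_of_isotropic (om ε r d) (om_swap hε hd r) hε h0 h1 h2 h3,
    CR1_eq hε hd, CR2_eq hε hd, Del_mul_sq hε (mul_ne_zero h01 h23)]

/-- The Gram determinant of a tuple in `P_r^{(4)}` equals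
`Δ(CR₁,CR₂) · (ω(v₀,v₁)·ω(v₂,v₃))²`. -/
theorem statement_7 (ε : ℂ) (d : ℕ)
    (hεd : (ε = 1 ∧ d = 1) ∨ (ε = -1 ∧ d = 0) ∨ (ε = 1 ∧ d = 0))
    (r : ℕ) (hr1 : 1 ≤ r) (hr2 : ε = 1 ∧ d = 0 → 2 ≤ r)
    (v0 v1 v2 v3 : Vc r d) (hp : Conf4 ε r d v0 v1 v2 v3) :
    (Matrix.of fun i j : Fin 4 =>
        om ε r d (![v0, v1, v2, v3] i) (![v0, v1, v2, v3] j)).det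
      = Del ε (CR1 ε r d v0 v1 v2 v3) (CR2 ε r d v0 v1 v2 v3) *
          (om ε r d v0 v1 * om ε r d v2 v3) ^ 2 :=
  statement_7_general ε d hεd r v0 v1 v2 v3 hp
end DCM
end
end

section
/- Fix (ε,d) ∈ {(1,1),(−1,0),(1,0)} and r ≥ r₁. Let p = ([v₀],[v₁],[v₂],[v₃]) ∈ P_r^{(4)} with fixed representatives v_i, let proj be the perpendicular projection onto the plane ⟨v₀,v₁⟩ given by proj(v) = (ω(v₁,v)/ω(v₁,v₀))·v₀ + (ω(v₀,v)/ω(v₀,v₁))·v₁, and write v̂ = v − proj(v). Then: (i) ω(v̂,ŵ) = ω(v̂,w) = ω(v,ŵ) for all v,w ∈ V_r; (ii) for every isotropic u ∈ V_r, q(û) = −(1+ε)·(ω(v₁,u)·ω(u,v₀)/ω(v₀,v₁)); (iii) ω(v̂₂,v̂₃) = ω(v₂,v₃)·Γ(CR₁(p),CR₂(p)); (iv) ω(v̂₂,v̂₃)² − q(v̂₂)·q(v̂₃) = ω(v₂,v₃)²·Δ(CR₁(p),CR₂(p)). -/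
noncomputable section

open scoped Classical

namespace DCM

/-!
The map `v ↦ v̂` kills the plane `⟨v₀, v₁⟩`: since `v₀, v₁` are isotropic and the form is
ε-symmetric, `v̂` is ω-orthogonal to `v₀` and `v₁` on either side. Hence `ω(v̂, ŵ)` may be
computed with one hat only, which turns (ii)–(iv) into identities between rational functions of
the pairings `ω(vᵢ, vⱼ)`; these hold because `ε² = 1`, which ε-symmetry forces as soon as
`ω(v₀, v₁) ≠ 0`.
-/

section BilinForm

variable {K V : Type*} [Field K] [AddCommGroup V] [Module K V]
  (B : LinearMap.BilinForm K V) {ε : K}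

def perpCompl (v0 v1 v : V) : V :=
  v - ((B v1 v / B v1 v0) • v0 + (B v0 v / B v0 v1) • v1)

def crossRatio (a b c e : V) : K := B a c * B b e / (B a e * B b c)

variable {B} {v0 v1 : V}

lemma eps_mul_self_of_swap (hswap : ∀ x y, B y x = ε * B x y) (h01 : B v0 v1 ≠ 0) :
    ε * ε = 1 := by
  have h := hswap v1 v0
  rw [hswap v0 v1, ← mul_assoc] at h
  exact (mul_eq_right₀ h01).mp h.symm

lemma perpCompl_apply_left (v w : V) :
    B (perpCompl B v0 v1 v) w
      = B v w - B v1 v / B v1 v0 * B v0 w - B v0 v / B v0 v1 * B v1 w := by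
  simp only [perpCompl, map_sub, map_add, map_smul, LinearMap.sub_apply, LinearMap.add_apply,
    LinearMap.smul_apply, smul_eq_mul]
  ring

lemma perpCompl_apply_right (v w : V) :
    B v (perpCompl B v0 v1 w)
      = B v w - B v1 w / B v1 v0 * B v v0 - B v0 w / B v0 v1 * B v v1 := by
  simp only [perpCompl, map_sub, map_add, map_smul, smul_eq_mul]
  ring

lemma perpCompl_orthogonal_right (h00 : B v0 v0 = 0) (h11 : B v1 v1 = 0) (h01 : B v0 v1 ≠ 0)
    (h10 : B v1 v0 ≠ 0) (w : V) :
    B v0 (perpCompl B v0 v1 w) = 0 ∧ B v1 (perpCompl B v0 v1 w) = 0 := by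
  simp only [perpCompl_apply_right, h00, h11]
  constructor <;> field_simp <;> ring

lemma perpCompl_orthogonal_left (hswap : ∀ x y, B y x = ε * B x y) (h00 : B v0 v0 = 0)
    (h11 : B v1 v1 = 0) (h01 : B v0 v1 ≠ 0) (v : V) :
    B (perpCompl B v0 v1 v) v0 = 0 ∧ B (perpCompl B v0 v1 v) v1 = 0 := by
  have hε0 : ε ≠ 0 := left_ne_zero_of_mul_eq_one (eps_mul_self_of_swap hswap h01)
  simp only [perpCompl_apply_left, h00, h11, hswap v0 v1, hswap v v1]
  constructor
  · field_simp
    linear_combination B v0 v1 * hswap v0 v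
  · field_simp
    ring

lemma perpCompl_apply_perpCompl (hswap : ∀ x y, B y x = ε * B x y) (h00 : B v0 v0 = 0)
    (h11 : B v1 v1 = 0) (h01 : B v0 v1 ≠ 0) (v w : V) :
    B (perpCompl B v0 v1 v) (perpCompl B v0 v1 w) = B (perpCompl B v0 v1 v) w ∧
      B (perpCompl B v0 v1 v) (perpCompl B v0 v1 w) = B v (perpCompl B v0 v1 w) := by
  have hε0 : ε ≠ 0 := left_ne_zero_of_mul_eq_one (eps_mul_self_of_swap hswap h01)
  have h10 : B v1 v0 ≠ 0 := by rw [hswap]; exact mul_ne_zero hε0 h01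
  obtain ⟨hl0, hl1⟩ := perpCompl_orthogonal_left hswap h00 h11 h01 v
  obtain ⟨hr0, hr1⟩ := perpCompl_orthogonal_right h00 h11 h01 h10 w
  constructor
  · rw [perpCompl_apply_right, hl0, hl1]; ring
  · rw [perpCompl_apply_left, hr0, hr1]; ring

lemma perpCompl_apply_self (hswap : ∀ x y, B y x = ε * B x y) (h00 : B v0 v0 = 0)
    (h11 : B v1 v1 = 0) (h01 : B v0 v1 ≠ 0) {u : V} (hu : B u u = 0) :
    B (perpCompl B v0 v1 u) (perpCompl B v0 v1 u) = -(1 + ε) * (B v1 u * B u v0 / B v0 v1) := by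
  have hε := eps_mul_self_of_swap hswap h01
  have hε0 : ε ≠ 0 := left_ne_zero_of_mul_eq_one hε
  rw [(perpCompl_apply_perpCompl hswap h00 h11 h01 u u).1, perpCompl_apply_left, hu,
    hswap v0 v1, hswap v0 u]
  field_simp
  linear_combination (1 + ε) * B v1 u * B v0 u * hε

lemma perpCompl_apply_perpCompl_eq_crossRatio (hswap : ∀ x y, B y x = ε * B x y)
    (h00 : B v0 v0 = 0) (h11 : B v1 v1 = 0) (h01 : B v0 v1 ≠ 0) {v2 v3 : V}
    (h23 : B v2 v3 ≠ 0) :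
    B (perpCompl B v0 v1 v2) (perpCompl B v0 v1 v3)
      = B v2 v3 * (1 - (crossRatio B v1 v2 v0 v3)⁻¹ - crossRatio B v2 v0 v1 v3) := by
  have hε := eps_mul_self_of_swap hswap h01
  have hε0 : ε ≠ 0 := left_ne_zero_of_mul_eq_one hε
  rw [(perpCompl_apply_perpCompl hswap h00 h11 h01 v2 v3).1, perpCompl_apply_left]
  simp only [crossRatio, hswap v0 v1, hswap v0 v2, hswap v1 v2]
  field_simp
  linear_combination B v1 v2 * B v0 v3 * hε

lemma perpCompl_discriminant_eq_crossRatio (hswap : ∀ x y, B y x = ε * B x y)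
    (h00 : B v0 v0 = 0) (h11 : B v1 v1 = 0) (h01 : B v0 v1 ≠ 0) {v2 v3 : V}
    (h22 : B v2 v2 = 0) (h33 : B v3 v3 = 0) (h23 : B v2 v3 ≠ 0) :
    B (perpCompl B v0 v1 v2) (perpCompl B v0 v1 v3) ^ 2
        - B (perpCompl B v0 v1 v2) (perpCompl B v0 v1 v2)
          * B (perpCompl B v0 v1 v3) (perpCompl B v0 v1 v3)
      = B v2 v3 ^ 2 * ((1 - (crossRatio B v1 v2 v0 v3)⁻¹ - crossRatio B v2 v0 v1 v3) ^ 2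
          - 2 * (1 + ε) * (crossRatio B v1 v2 v0 v3)⁻¹ * crossRatio B v2 v0 v1 v3) := by
  have hε := eps_mul_self_of_swap hswap h01
  have hε0 : ε ≠ 0 := left_ne_zero_of_mul_eq_one hε
  rw [perpCompl_apply_perpCompl_eq_crossRatio hswap h00 h11 h01 h23,
    perpCompl_apply_self hswap h00 h11 h01 h22, perpCompl_apply_self hswap h00 h11 h01 h33]
  simp only [crossRatio, hswap v0 v1, hswap v0 v2, hswap v1 v2, hswap v0 v3]
  field_simp
  linear_combination -(ε * (ε + 2) * B v1 v3 * B v0 v2 * B v1 v2 * B v0 v3) * hε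

end BilinForm

def omForm (ε : ℂ) (r d : ℕ) : LinearMap.BilinForm ℂ (Vc r d) :=
  LinearMap.mk₂ ℂ (om ε r d)
    (fun v v' w => by
      simp only [om, Pi.add_apply, add_mul, Finset.sum_add_distrib, mul_add]
      split_ifs <;> ring)
    (fun c v w => by
      simp only [om, Pi.smul_apply, smul_eq_mul, mul_add, Finset.mul_sum]
      congr 1
      · exact Finset.sum_congr rfl fun j _ => by ring
      · split_ifs <;> ring)
    (fun v w w' => by
      simp only [om, Pi.add_apply, mul_add, Finset.sum_add_distrib]
      split_ifs <;> ring)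
    (fun c v w => by
      simp only [om, Pi.smul_apply, smul_eq_mul, mul_add, Finset.mul_sum]
      congr 1
      · exact Finset.sum_congr rfl fun j _ => by ring
      · split_ifs <;> ring)

lemma omForm_apply (ε : ℂ) (r d : ℕ) (v w : Vc r d) : omForm ε r d v w = om ε r d v w := rfl

lemma omForm_swap {ε : ℂ} {r d : ℕ} (hε : ε * ε = 1) (hd : d = 1 → ε = 1) (v w : Vc r d) :
    omForm ε r d w v = ε * omForm ε r d v w := by
  simp only [omForm_apply, om, mul_add, Finset.mul_sum]
  congr 1
  · refine Finset.sum_congr rfl fun j _ => ?_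
    linear_combination (-(v ⟨r + d + (j : ℕ), by omega⟩ * w ⟨r - 1 - (j : ℕ), by omega⟩)) * hε
  · split_ifs with h1
    · rw [hd h1]; ring
    · ring

theorem statement_8_general (ε : ℂ) (d : ℕ)
    (hεd : (ε = 1 ∧ d = 1) ∨ (ε = -1 ∧ d = 0) ∨ (ε = 1 ∧ d = 0))
    (r : ℕ)
    (v0 v1 v2 v3 : Vc r d) (hp : Conf4 ε r d v0 v1 v2 v3)
    (hat : Vc r d → Vc r d)
    (hhat : ∀ v, hat v = v - ((om ε r d v1 v / om ε r d v1 v0) • v0 +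
      (om ε r d v0 v / om ε r d v0 v1) • v1)) :
    -- (i)
    (∀ v w : Vc r d, om ε r d (hat v) (hat w) = om ε r d (hat v) w ∧
      om ε r d (hat v) (hat w) = om ε r d v (hat w)) ∧
    -- (ii)
    (∀ u : Vc r d, IsoV ε r d u →
      om ε r d (hat u) (hat u)
        = -(1 + ε) * (om ε r d v1 u * om ε r d u v0 / om ε r d v0 v1)) ∧
    -- (iii)
    om ε r d (hat v2) (hat v3)
      = om ε r d v2 v3 * Gam (CR1 ε r d v0 v1 v2 v3) (CR2 ε r d v0 v1 v2 v3) ∧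
    -- (iv)
    om ε r d (hat v2) (hat v3) ^ 2 - om ε r d (hat v2) (hat v2) * om ε r d (hat v3) (hat v3)
      = om ε r d v2 v3 ^ 2 * Del ε (CR1 ε r d v0 v1 v2 v3) (CR2 ε r d v0 v1 v2 v3) := by
  have hε : ε * ε = 1 := by
    rcases hεd with ⟨rfl, -⟩ | ⟨rfl, -⟩ | ⟨rfl, -⟩ <;> norm_num
  have hd : d = 1 → ε = 1 := by
    rintro rfl
    rcases hεd with ⟨hε1, -⟩ | ⟨-, ⟨⟩⟩ | ⟨-, ⟨⟩⟩
    exact hε1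
  have hswap := omForm_swap (r := r) hε hd
  obtain ⟨⟨-, h00⟩, ⟨-, h11⟩, ⟨-, h22⟩, ⟨-, h33⟩, h01, -, -, -, -, h23⟩ := hp
  obtain rfl : hat = perpCompl (omForm ε r d) v0 v1 := funext hhat
  exact ⟨perpCompl_apply_perpCompl hswap h00 h11 h01,
    fun u hu => perpCompl_apply_self hswap h00 h11 h01 hu.2,
    perpCompl_apply_perpCompl_eq_crossRatio hswap h00 h11 h01 h23,
    perpCompl_discriminant_eq_crossRatio hswap h00 h11 h01 h22 h33 h23⟩

/-- Properties of the perpendicular projection onto `⟨v₀,v₁⟩` and of the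
complement map `v ↦ v̂ = v − proj(v)`, for a tuple in `P_r^{(4)}`. -/
theorem statement_8 (ε : ℂ) (d : ℕ)
    (hεd : (ε = 1 ∧ d = 1) ∨ (ε = -1 ∧ d = 0) ∨ (ε = 1 ∧ d = 0))
    (r : ℕ) (hr1 : 1 ≤ r) (hr2 : ε = 1 ∧ d = 0 → 2 ≤ r)
    (v0 v1 v2 v3 : Vc r d) (hp : Conf4 ε r d v0 v1 v2 v3)
    (hat : Vc r d → Vc r d)
    (hhat : ∀ v, hat v = v - ((om ε r d v1 v / om ε r d v1 v0) • v0 +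
      (om ε r d v0 v / om ε r d v0 v1) • v1)) :
    -- (i)
    (∀ v w : Vc r d, om ε r d (hat v) (hat w) = om ε r d (hat v) w ∧
      om ε r d (hat v) (hat w) = om ε r d v (hat w)) ∧
    -- (ii)
    (∀ u : Vc r d, IsoV ε r d u →
      om ε r d (hat u) (hat u)
        = -(1 + ε) * (om ε r d v1 u * om ε r d u v0 / om ε r d v0 v1)) ∧
    -- (iii)
    om ε r d (hat v2) (hat v3)
      = om ε r d v2 v3 * Gam (CR1 ε r d v0 v1 v2 v3) (CR2 ε r d v0 v1 v2 v3) ∧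
    -- (iv)
    om ε r d (hat v2) (hat v3) ^ 2 - om ε r d (hat v2) (hat v2) * om ε r d (hat v3) (hat v3)
      = om ε r d v2 v3 ^ 2 * Del ε (CR1 ε r d v0 v1 v2 v3) (CR2 ε r d v0 v1 v2 v3) :=
  statement_8_general ε d hεd r v0 v1 v2 v3 hp hat hhat
end DCM
end
end
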